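/- With F as above, the products satisfy: v_1' v_5' = [(ab)^6 c^4 (v_1v_4)^3 + 3(ab)^4(v_1v_4)^2 + 3(ab)^2(v_1v_4) + c^4] / [a^6c^4(v_1v_4)^3 + 3a^4b^2(v_1v_4)^2 + 3a^2b^4(v_1v_4) + b^6c^4] and v_4' v_8' = [c^4 + 3(ab)^2(v_5v_8) + 3(ab)^4(v_5v_8)^2 + (ab)^6c^4(v_5v_8)^3] / [b^6c^4 + 3a^2b^4(v_5v_8) + 3a^4b^2(v_5v_8)^2 + c^4a^6(v_5v_8)^3]. In particular, v_1'v_5' and v_4'v_8' depend only on the products v_1v_4 and v_5v_8 respectively, and the constant L cancels. -/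

import Mathlib

/-- The Gibbs recursion operator `F` on `(ℝ_{>0})^4`. -/
noncomputable def Fop (a b c L : ℝ) (v : ℝ × ℝ × ℝ × ℝ) : ℝ × ℝ × ℝ × ℝ :=
  let v1 := v.1; let v4 := v.2.1; let v5 := v.2.2.1; let v8 := v.2.2.2
  ( L * ((a*b)^6*c^4*(v1*v4)^3 + 3*(a*b)^4*(v1*v4)^2 + 3*(a*b)^2*(v1*v4) + c^4) /
      ((a*b)^3*c*v4^3),
    (a*b)^3*c*v5^3 /
      (L * (b^6*c^4 + 3*a^2*b^4*(v5*v8) + 3*a^4*b^2*(v5*v8)^2 + c^4*a^6*(v5*v8)^3)),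
    (a*b)^3*c*v4^3 /
      (L * (a^6*c^4*(v1*v4)^3 + 3*a^4*b^2*(v1*v4)^2 + 3*a^2*b^4*(v1*v4) + b^6*c^4)),
    L * (c^4 + 3*(a*b)^2*(v5*v8) + 3*(a*b)^4*(v5*v8)^2 + (a*b)^6*c^4*(v5*v8)^3) /
      ((a*b)^3*c*v5^3) )

theorem products_formula_general (a b c L : ℝ) (ha : 0 < a) (hb : 0 < b) (hc : 0 < c)
    (hL : 0 < L) (v : ℝ × ℝ × ℝ × ℝ)
    (h4 : 0 < v.2.1) (h5 : 0 < v.2.2.1) :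
    (Fop a b c L v).1 * (Fop a b c L v).2.2.1 =
      ((a*b)^6*c^4*(v.1*v.2.1)^3 + 3*(a*b)^4*(v.1*v.2.1)^2 + 3*(a*b)^2*(v.1*v.2.1) + c^4) /
        (a^6*c^4*(v.1*v.2.1)^3 + 3*a^4*b^2*(v.1*v.2.1)^2 + 3*a^2*b^4*(v.1*v.2.1) + b^6*c^4) ∧
    (Fop a b c L v).2.1 * (Fop a b c L v).2.2.2 =
      (c^4 + 3*(a*b)^2*(v.2.2.1*v.2.2.2) + 3*(a*b)^4*(v.2.2.1*v.2.2.2)^2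
          + (a*b)^6*c^4*(v.2.2.1*v.2.2.2)^3) /
        (b^6*c^4 + 3*a^2*b^4*(v.2.2.1*v.2.2.2) + 3*a^4*b^2*(v.2.2.1*v.2.2.2)^2
          + c^4*a^6*(v.2.2.1*v.2.2.2)^3) := by
  have hK : ∀ x : ℝ, 0 < x → (a*b)^3*c*x^3 ≠ 0 := fun x hx => by positivity
  dsimp only [Fop]
  constructor
  · rw [div_mul_div_cancel₀ (hK _ h4), mul_div_mul_left _ _ hL.ne']
  · rw [mul_comm, div_mul_div_cancel₀ (hK _ h5), mul_div_mul_left _ _ hL.ne']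

/-- The products `v₁'v₅'` and `v₄'v₈'` depend only on `v₁v₄` resp. `v₅v₈`, and
the constant `L` cancels. -/
theorem products_formula (a b c L : ℝ) (ha : 0 < a) (hb : 0 < b) (hc : 0 < c)
    (hL : 0 < L) (v : ℝ × ℝ × ℝ × ℝ)
    (h1 : 0 < v.1) (h4 : 0 < v.2.1) (h5 : 0 < v.2.2.1) (h8 : 0 < v.2.2.2) :
    (Fop a b c L v).1 * (Fop a b c L v).2.2.1 =
      ((a*b)^6*c^4*(v.1*v.2.1)^3 + 3*(a*b)^4*(v.1*v.2.1)^2 + 3*(a*b)^2*(v.1*v.2.1) + c^4) /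
        (a^6*c^4*(v.1*v.2.1)^3 + 3*a^4*b^2*(v.1*v.2.1)^2 + 3*a^2*b^4*(v.1*v.2.1) + b^6*c^4) ∧
    (Fop a b c L v).2.1 * (Fop a b c L v).2.2.2 =
      (c^4 + 3*(a*b)^2*(v.2.2.1*v.2.2.2) + 3*(a*b)^4*(v.2.2.1*v.2.2.2)^2
          + (a*b)^6*c^4*(v.2.2.1*v.2.2.2)^3) /
        (b^6*c^4 + 3*a^2*b^4*(v.2.2.1*v.2.2.2) + 3*a^4*b^2*(v.2.2.1*v.2.2.2)^2
          + c^4*a^6*(v.2.2.1*v.2.2.2)^3) :=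
  products_formula_general a b c L ha hb hc hL v h4 h5
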